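/- In a bi-gyrogroupoid, every left inverse is also a right inverse: if b⊕a = 0 then a⊕b = 0. -/

import Mathlib

/-- A bi-gyrogroupoid: a set `β` with a binary operation `add`, an identity `zero`,
and two families of gyrations `lgyr`, `rgyr` satisfying axioms (BG1)–(BG5). -/
structure IsBiGyrogroupoid {β : Type*} (add : β → β → β) (zero : β)
    (lgyr rgyr : β → β → β → β) : Prop where
  /-- (BG1) `zero` is a two-sided identity. -/
  zero_add : ∀ a, add zero a = a
  add_zero : ∀ a, add a zero = a
  /-- (BG2) every element has a left inverse. -/
  exists_left_inv : ∀ a, ∃ b, add b a = zero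
  /-- (BG3) gyrations are automorphisms of `(β, add)`. -/
  lgyr_bijective : ∀ a b, Function.Bijective (lgyr a b)
  rgyr_bijective : ∀ a b, Function.Bijective (rgyr a b)
  lgyr_add : ∀ a b x y, lgyr a b (add x y) = add (lgyr a b x) (lgyr a b y)
  rgyr_add : ∀ a b x y, rgyr a b (add x y) = add (rgyr a b x) (rgyr a b y)
  /-- (BG3) the bi-gyroassociative law. -/
  bgassoc : ∀ a b c, add (add a b) (lgyr a b c) = add (rgyr b c a) (add b c)
  /-- (BG4a) -/
  rgyr_red : ∀ a b, rgyr a b = rgyr (lgyr a b a) (add a b)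
  /-- (BG4b) -/
  lgyr_red : ∀ a b, lgyr a b = lgyr (lgyr a b a) (add a b)
  /-- (BG5) -/
  lgyr_zero : ∀ a, lgyr a zero = id
  rgyr_zero : ∀ a, rgyr a zero = id

namespace IsBiGyrogroupoid

variable {β : Type*} {add : β → β → β} {zero : β} {lgyr rgyr : β → β → β → β}

theorem lgyr_eq_id_of_add_eq_zero (h : IsBiGyrogroupoid add zero lgyr rgyr) {x a : β}
    (hxa : add x a = zero) : lgyr x a = id := by
  rw [h.lgyr_red, hxa, h.lgyr_zero]

theorem rgyr_eq_id_of_add_eq_zero (h : IsBiGyrogroupoid add zero lgyr rgyr) {x a : β}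
    (hxa : add x a = zero) : rgyr x a = id := by
  rw [h.rgyr_red, hxa, h.rgyr_zero]

/-- Bi-gyroassociativity of `c, b, a` with trivial gyrations reads `0 ⊕ a = c ⊕ 0`. -/
theorem left_inv_eq_right_inv (h : IsBiGyrogroupoid add zero lgyr rgyr) {a b c : β}
    (hcb : add c b = zero) (hba : add b a = zero) : c = a := by
  have hassoc := h.bgassoc c b a
  rw [h.lgyr_eq_id_of_add_eq_zero hcb, h.rgyr_eq_id_of_add_eq_zero hba, hcb, hba,
    h.zero_add, h.add_zero] at hassoc
  exact hassoc.symm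

end IsBiGyrogroupoid

/-- In a bi-gyrogroupoid, every left inverse is also a right inverse. -/
theorem biGyrogroupoid_left_inv_right_inv {β : Type*} (add : β → β → β) (zero : β)
    (lgyr rgyr : β → β → β → β)
    (h : IsBiGyrogroupoid add zero lgyr rgyr) :
    ∀ a b, add b a = zero → add a b = zero := by
  intro a b hba
  obtain ⟨c, hcb⟩ := h.exists_left_inv b
  rw [← h.left_inv_eq_right_inv hcb hba, hcb]
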